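/- arXiv:1308.2334 — 4 statements merged into one kernel-verified Lean document; each statement's English description precedes it below -/
import Mathlib

section
/- For integers or ±∞ values a ≤ b, define the interval representation k_{ab} of the zigzag quiver A∞∞ by k_{ab}(i) = k if a ≤ i ≤ b and 0 otherwise, with k_{ab}(α) = id when both source and target lie in [a,b], and 0 otherwise. Then each k_{ab} is an indecomposable representation. -/
/-!  Representations of the zigzag quiver `A∞∞`: vertices are the integers, each odd
vertex `i` is a source with arrows `i → i-1` and `i → i+1`, each even vertex is a sink. -/

/-- A representation of the zigzag-oriented quiver `A∞∞` over `k`. -/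
structure ZigzagRep (k : Type) [Field k] where
  V : ℤ → Type
  [acg : ∀ i, AddCommGroup (V i)]
  [mod : ∀ i, Module k (V i)]
  /-- the structure map `V i → V (i-1)` out of an odd vertex `i` -/
  f : ∀ (i : ℤ), Odd i → (V i →ₗ[k] V (i - 1))
  /-- the structure map `V i → V (i+1)` out of an odd vertex `i` -/
  g : ∀ (i : ℤ), Odd i → (V i →ₗ[k] V (i + 1))

attribute [instance] ZigzagRep.acg ZigzagRep.mod

variable {k : Type} [Field k]

/-- A morphism of representations of the zigzag quiver. -/
structure ZigzagHom (X Y : ZigzagRep k) where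
  h : ∀ i, X.V i →ₗ[k] Y.V i
  commf : ∀ (i : ℤ) (hi : Odd i), (h (i - 1)).comp (X.f i hi) = (Y.f i hi).comp (h i)
  commg : ∀ (i : ℤ) (hi : Odd i), (h (i + 1)).comp (X.g i hi) = (Y.g i hi).comp (h i)

/-- A representation is indecomposable iff it is nonzero and admits no nontrivial direct sum
decomposition; equivalently (idempotents split in this abelian category) iff it is nonzero and
its only idempotent endomorphisms are `0` and `id`. -/
def ZigzagRep.Indecomposable (X : ZigzagRep k) : Prop :=
  (∃ (i : ℤ) (v : X.V i), v ≠ 0) ∧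
    ∀ e : ZigzagHom X X, (∀ i, (e.h i).comp (e.h i) = e.h i) →
      (∀ i, e.h i = 0) ∨ (∀ i, e.h i = LinearMap.id)

/-- A representation is thin if each vertex space has dimension at most `1`, i.e. is spanned
by a single vector. -/
def ZigzagRep.Thin (X : ZigzagRep k) : Prop :=
  ∀ i : ℤ, ∃ v : X.V i, ∀ w : X.V i, ∃ c : k, w = c • v

/-- `i` lies in the interval `[a, b]`, where `a ∈ ℤ ∪ {-∞}` and `b ∈ ℤ ∪ {+∞}`. -/
def inIcc (a : WithBot ℤ) (b : WithTop ℤ) (i : ℤ) : Prop :=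
  a ≤ (i : WithBot ℤ) ∧ (i : WithTop ℤ) ≤ b

/-- `a ≤ b` inside `ℤ ∪ {±∞}`. -/
def intervalLE (a : WithBot ℤ) (b : WithTop ℤ) : Prop :=
  WithBot.map (fun n : ℤ => (n : WithTop ℤ)) a ≤ (b : WithBot (WithTop ℤ))

/-- The canonical map between the "interval" vertex spaces: the identity whenever both
source and target lie in the interval, and `0` otherwise. -/
noncomputable def offMap (k : Type) [Field k] (P Q : Prop) :
    (PLift P → k) →ₗ[k] (PLift Q → k) := by
  classical
  exact
    { toFun := fun v _ => if hp : P then v ⟨hp⟩ else 0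
      map_add' := by intro x y; funext hq; by_cases hp : P <;> simp [hp]
      map_smul' := by intro c x; funext hq; by_cases hp : P <;> simp [hp] }

/-- The interval representation `k_{ab}` of the zigzag quiver: `k` at the vertices of
`[a,b]`, zero elsewhere, with identity structure maps inside the interval and zero maps
otherwise. -/
noncomputable def intervalRep (k : Type) [Field k] (a : WithBot ℤ) (b : WithTop ℤ) :
    ZigzagRep k where
  V i := PLift (inIcc a b i) → k
  acg i := inferInstance
  mod i := inferInstance
  f i _ := offMap k (inIcc a b i) (inIcc a b (i - 1))
  g i _ := offMap k (inIcc a b i) (inIcc a b (i + 1))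

/-! Every vertex space of `k_{ab}` is `k` or `0`, so an endomorphism acts at each vertex by a
scalar. Inside `[a, b]` the structure maps are identities, so commutativity forces adjacent
scalars to agree; as `[a, b]` is a nonempty interval of `ℤ` the scalar is a single `c`, and
idempotence gives `c = 0` or `c = 1`. -/

lemma Int.eq_of_forall_add_one_of_ordConnected {α : Type*} {S : Set ℤ} (hS : S.OrdConnected)
    {c : ℤ → α} (hc : ∀ j ∈ S, j + 1 ∈ S → c j = c (j + 1)) {i j : ℤ} (hi : i ∈ S)
    (hj : j ∈ S) : c i = c j := by
  wlog hij : i ≤ j generalizing i j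
  · exact (this hj hi (le_of_not_ge hij)).symm
  induction j, hij using Int.leInduction with
  | base => rfl
  | succ j hij ih =>
    have hjS : j ∈ S := hS.out hi hj ⟨hij, by omega⟩
    exact (ih hjS).trans (hc j hjS hj)

lemma LinearMap.eq_of_smul_id_comp_eq_comp_smul_id {K M N : Type*} [Field K] [AddCommGroup M]
    [Module K M] [AddCommGroup N] [Module K N] {φ : M →ₗ[K] N} (hφ : φ ≠ 0) {c d : K}
    (h : (d • LinearMap.id).comp φ = φ.comp (c • LinearMap.id)) : d = c := by
  rw [LinearMap.smul_comp, LinearMap.comp_smul, LinearMap.id_comp, LinearMap.comp_id] at h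
  exact smul_left_injective K hφ h

lemma LinearMap.isIdempotentElem_of_smul_id_comp_self {K M : Type*} [Field K] [AddCommGroup M]
    [Module K M] [Nontrivial M] {c : K}
    (h : (c • LinearMap.id : M →ₗ[K] M).comp (c • LinearMap.id) = c • LinearMap.id) :
    IsIdempotentElem c := by
  rw [LinearMap.smul_comp, LinearMap.comp_smul, LinearMap.id_comp, smul_smul] at h
  exact smul_left_injective K (one_ne_zero (α := Module.End K M)) h

lemma exists_inIcc_of_intervalLE {a : WithBot ℤ} {b : WithTop ℤ} (hab : intervalLE a b) :
    ∃ i : ℤ, inIcc a b i := by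
  induction a using WithBot.recBotCoe with
  | bot =>
    induction b using WithTop.recTopCoe with
    | top => exact ⟨0, bot_le, le_top⟩
    | coe n => exact ⟨n, bot_le, le_rfl⟩
  | coe m =>
    refine ⟨m, le_rfl, ?_⟩
    induction b using WithTop.recTopCoe with
    | top => exact le_top
    | coe n =>
      simp only [intervalLE, WithBot.map_coe, WithBot.coe_le_coe] at hab
      exact hab

lemma ordConnected_setOf_inIcc (a : WithBot ℤ) (b : WithTop ℤ) :
    {i | inIcc a b i}.OrdConnected :=
  ⟨fun _ hi _ hj _ hm => ⟨hi.1.trans (WithBot.coe_le_coe.2 hm.1),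
    (WithTop.coe_le_coe.2 hm.2).trans hj.2⟩⟩

lemma offMap_ne_zero {P Q : Prop} (hp : P) (hq : Q) : offMap k P Q ≠ 0 := by
  intro h
  have := congrFun (LinearMap.congr_fun h fun _ => 1) ⟨hq⟩
  simp [offMap, hp] at this

namespace intervalRep

variable {a : WithBot ℤ} {b : WithTop ℤ} {i : ℤ}

lemma nontrivial_V (hi : inIcc a b i) : Nontrivial ((intervalRep k a b).V i) :=
  have : Nonempty (PLift (inIcc a b i)) := ⟨⟨hi⟩⟩
  Function.nontrivial

lemma subsingleton_V (hi : ¬ inIcc a b i) : Subsingleton ((intervalRep k a b).V i) :=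
  have : IsEmpty (PLift (inIcc a b i)) := ⟨fun h => hi h.down⟩
  inferInstanceAs (Subsingleton (PLift _ → k))

lemma exists_eq_smul_id (φ : Module.End k ((intervalRep k a b).V i)) :
    ∃ c : k, φ = c • LinearMap.id := by
  by_cases hi : inIcc a b i
  · have : Unique (PLift (inIcc a b i)) := ⟨⟨⟨hi⟩⟩, fun _ => rfl⟩
    have hrank : Module.finrank k (PLift (inIcc a b i) → k) = 1 := by simp
    exact (φ.existsUnique_eq_smul_id_of_finrank_eq_one hrank).exists
  · have := subsingleton_V (k := k) hi
    exact ⟨0, Subsingleton.elim _ _⟩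

lemma scalar_eq_scalar_add_one (e : ZigzagHom (intervalRep k a b) (intervalRep k a b))
    {c : ℤ → k} (hc : ∀ i, e.h i = c i • LinearMap.id) {j : ℤ} (hj : inIcc a b j)
    (hj' : inIcc a b (j + 1)) : c j = c (j + 1) := by
  rcases Int.even_or_odd j with heven | hodd
  · have hcomm := e.commf (j + 1) heven.add_one
    rw [hc, hc] at hcomm
    have hj'' : inIcc a b (j + 1 - 1) := by rwa [add_sub_cancel_right]
    simpa using LinearMap.eq_of_smul_id_comp_eq_comp_smul_id (offMap_ne_zero hj' hj'') hcomm
  · have hcomm := e.commg j hodd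
    rw [hc, hc] at hcomm
    exact (LinearMap.eq_of_smul_id_comp_eq_comp_smul_id (offMap_ne_zero hj hj') hcomm).symm

end intervalRep

/-- For `a ≤ b` in `ℤ ∪ {±∞}`, the interval representation `k_{ab}` of the
zigzag quiver `A∞∞` is indecomposable. -/
theorem intervalRep_indecomposable (k : Type) [Field k]
    (a : WithBot ℤ) (b : WithTop ℤ) (hab : intervalLE a b) :
    (intervalRep k a b).Indecomposable := by
  obtain ⟨i₀, hi₀⟩ := exists_inIcc_of_intervalLE hab
  have := intervalRep.nontrivial_V (k := k) hi₀
  refine ⟨⟨i₀, exists_ne 0⟩, fun e he => ?_⟩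
  choose c hc using fun i => intervalRep.exists_eq_smul_id (e.h i)
  have hconst : ∀ i, e.h i = c i₀ • LinearMap.id := by
    intro i
    by_cases hi : inIcc a b i
    · rw [hc i, Int.eq_of_forall_add_one_of_ordConnected (ordConnected_setOf_inIcc a b)
        (fun _ => intervalRep.scalar_eq_scalar_add_one e hc) hi hi₀]
    · have := intervalRep.subsingleton_V (k := k) hi
      exact Subsingleton.elim _ _
  have hidem : IsIdempotentElem (c i₀) := by
    have := he i₀
    rw [hconst] at this
    exact LinearMap.isIdempotentElem_of_smul_id_comp_self this
  rcases IsIdempotentElem.iff_eq_zero_or_one.1 hidem with h | h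
  · exact Or.inl fun i => by rw [hconst, h, zero_smul]
  · exact Or.inr fun i => by rw [hconst, h, one_smul]
end

section
/- Let V be a representation of the zigzag quiver A∞∞ over a field k. If every nonzero structure map of V is bijective and V is indecomposable, then V is isomorphic to an interval representation k_{ab} for some a ≤ b in ℤ ∪ {±∞}. -/
variable {k : Type} [Field k]

/-! Complete each structure map by a map in the opposite direction, its inverse or `0`.
Composing these along the path from a vertex `i₀` with `V i₀ ≠ 0` gives maps
`T j : V i₀ → V j` and `S j : V j → V i₀` with `S j ∘ T j = id` or `T j = 0`; as `T j = 0`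
persists away from `i₀`, the set `{j | T j ≠ 0}` is an interval. For an idempotent `p` of
`V i₀`, the maps `T j ∘ p ∘ S j` form an idempotent endomorphism of `V`. Indecomposability then
forces `p ∈ {0, 1}`, so `V i₀ ≅ k`, and, for `p = 1`, `T j ∘ S j = id` for all `j`; hence `S`
identifies `V` with `k` on the interval and `V j = 0` off it. -/

open Function

section InverseOrZero

variable {R A B : Type*} [Semiring R] [AddCommMonoid A] [Module R A] [AddCommMonoid B] [Module R B]

def IsInverseOrZero (α : A →ₗ[R] B) (β : B →ₗ[R] A) : Prop :=
  (β ∘ₗ α = LinearMap.id ∧ α ∘ₗ β = LinearMap.id) ∨ (α = 0 ∧ β = 0)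

lemma IsInverseOrZero.symm {α : A →ₗ[R] B} {β : B →ₗ[R] A} (h : IsInverseOrZero α β) :
    IsInverseOrZero β α :=
  h.imp And.symm And.symm

lemma exists_isInverseOrZero {α : A →ₗ[R] B} (h : α = 0 ∨ Bijective α) :
    ∃ β, IsInverseOrZero α β := by
  rcases h with rfl | hα
  · exact ⟨0, Or.inr ⟨rfl, rfl⟩⟩
  · let e := LinearEquiv.ofBijective α hα
    exact ⟨e.symm, Or.inl ⟨LinearMap.ext e.symm_apply_apply, LinearMap.ext e.apply_symm_apply⟩⟩

end InverseOrZero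

section Transport

variable {R : Type*} [Semiring R]

lemma Int.induction_from (i₀ : ℤ) {P : ℤ → Prop} (base : P i₀)
    (up : ∀ j, i₀ ≤ j → P j → P (j + 1)) (down : ∀ j < i₀, P (j + 1) → P j) (j : ℤ) : P j :=
  Int.inductionOn' j i₀ base up fun n hn h => down (n - 1) (by omega) (by rwa [sub_add_cancel])

variable {W : ℤ → Type*} [∀ j, AddCommMonoid (W j)] [∀ j, Module R (W j)]

lemma LinearEquiv.cast_comp {X : Type*} [AddCommMonoid X] [Module R X] (F : ∀ j, X →ₗ[R] W j)
    {i j : ℤ} (h : i = j) : (LinearEquiv.cast h).toLinearMap ∘ₗ F i = F j := by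
  subst h; rfl

lemma LinearEquiv.comp_cast {X : Type*} [AddCommMonoid X] [Module R X] (F : ∀ j, W j →ₗ[R] X)
    {i j : ℤ} (h : i = j) : F j ∘ₗ (LinearEquiv.cast h).toLinearMap = F i := by
  subst h; rfl

lemma LinearEquiv.comp_cast_eq_cast_comp {W' : ℤ → Type*} [∀ j, AddCommMonoid (W' j)]
    [∀ j, Module R (W' j)] (φ : ∀ j, W j →ₗ[R] W' j) {i j : ℤ} (h : i = j) :
    φ j ∘ₗ (LinearEquiv.cast h).toLinearMap = (LinearEquiv.cast h).toLinearMap ∘ₗ φ i := by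
  subst h; rfl

variable (α : ∀ j, W j →ₗ[R] W (j + 1)) (β : ∀ j, W (j + 1) →ₗ[R] W j) (i₀ : ℤ)

def transport (j : ℤ) : W i₀ →ₗ[R] W j :=
  Int.inductionOn' j i₀ LinearMap.id (fun j _ T => α j ∘ₗ T)
    fun j _ T => β (j - 1) ∘ₗ (LinearEquiv.cast (by omega)).toLinearMap ∘ₗ T

def transportBack (j : ℤ) : W j →ₗ[R] W i₀ :=
  Int.inductionOn' j i₀ LinearMap.id (fun j _ S => S ∘ₗ β j)
    fun j _ S => S ∘ₗ (LinearEquiv.cast (by omega)).toLinearMap ∘ₗ α (j - 1)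

def transportConj (p : Module.End R (W i₀)) (j : ℤ) : Module.End R (W j) :=
  transport α β i₀ j ∘ₗ p ∘ₗ transportBack α β i₀ j

variable {α β i₀}

@[simp] lemma transport_self : transport α β i₀ i₀ = LinearMap.id :=
  Int.inductionOn'_self

@[simp] lemma transportBack_self : transportBack α β i₀ i₀ = LinearMap.id :=
  Int.inductionOn'_self

lemma transport_add_one {j : ℤ} (h : i₀ ≤ j) :
    transport α β i₀ (j + 1) = α j ∘ₗ transport α β i₀ j :=
  Int.inductionOn'_add_one h

lemma transportBack_add_one {j : ℤ} (h : i₀ ≤ j) :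
    transportBack α β i₀ (j + 1) = transportBack α β i₀ j ∘ₗ β j :=
  Int.inductionOn'_add_one h

lemma transport_of_lt {j : ℤ} (h : j < i₀) :
    transport α β i₀ j = β j ∘ₗ transport α β i₀ (j + 1) := by
  obtain ⟨n, rfl⟩ : ∃ n, j = n - 1 := ⟨j + 1, by ring⟩
  rw [transport, Int.inductionOn'_sub_one (by omega)]
  exact congrArg (β (n - 1) ∘ₗ ·) (LinearEquiv.cast_comp (transport α β i₀) _)

lemma transportBack_of_lt {j : ℤ} (h : j < i₀) :
    transportBack α β i₀ j = transportBack α β i₀ (j + 1) ∘ₗ α j := by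
  obtain ⟨n, rfl⟩ : ∃ n, j = n - 1 := ⟨j + 1, by ring⟩
  rw [transportBack, Int.inductionOn'_sub_one (by omega)]
  exact congrArg (· ∘ₗ α (n - 1))
    (LinearEquiv.comp_cast (transportBack α β i₀) (sub_add_cancel n 1))

lemma transport_eq_zero_of_le {i j : ℤ} (hi : i₀ ≤ i) (h0 : transport α β i₀ i = 0)
    (hij : i ≤ j) : transport α β i₀ j = 0 := by
  induction j, hij using Int.leInduction with
  | base => exact h0
  | succ j hij ih => rw [transport_add_one (hi.trans hij), ih, LinearMap.comp_zero]

lemma transport_eq_zero_of_ge {i j : ℤ} (hi : i ≤ i₀) (h0 : transport α β i₀ i = 0)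
    (hji : j ≤ i) : transport α β i₀ j = 0 := by
  induction j, hji using Int.leInductionDown with
  | base => exact h0
  | pred j hji ih =>
    rw [← sub_add_cancel j 1] at ih
    rw [transport_of_lt (by omega), ih, LinearMap.comp_zero]

lemma ordConnected_transport_ne_zero : Set.OrdConnected {j | transport α β i₀ j ≠ 0} := by
  refine ⟨fun i hi l hl j ⟨hij, hjl⟩ hj => ?_⟩
  rcases le_total i₀ j with h | h
  · exact hl (transport_eq_zero_of_le h hj hjl)
  · exact hi (transport_eq_zero_of_ge h hj hij)

lemma transport_add_one_of_comp_eq_id {j : ℤ} (h : α j ∘ₗ β j = LinearMap.id) :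
    transport α β i₀ (j + 1) = α j ∘ₗ transport α β i₀ j := by
  rcases le_or_gt i₀ j with hj | hj
  · exact transport_add_one hj
  · rw [transport_of_lt hj, ← LinearMap.comp_assoc, h, LinearMap.id_comp]

lemma transportBack_add_one_of_comp_eq_id {j : ℤ} (h : α j ∘ₗ β j = LinearMap.id) :
    transportBack α β i₀ (j + 1) = transportBack α β i₀ j ∘ₗ β j := by
  rcases le_or_gt i₀ j with hj | hj
  · exact transportBack_add_one hj
  · rw [transportBack_of_lt hj, LinearMap.comp_assoc, h, LinearMap.comp_id]

lemma transportBack_add_one_comp {j : ℤ} (h : β j ∘ₗ α j = LinearMap.id) :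
    transportBack α β i₀ (j + 1) ∘ₗ α j = transportBack α β i₀ j := by
  rcases le_or_gt i₀ j with hj | hj
  · rw [transportBack_add_one hj, LinearMap.comp_assoc, h, LinearMap.comp_id]
  · exact (transportBack_of_lt hj).symm

lemma transport_eq_zero_of_edge_eq_zero {j : ℤ} (hα : α j = 0) (hβ : β j = 0) :
    transport α β i₀ (j + 1) = 0 ∨ transport α β i₀ j = 0 := by
  rcases le_or_gt i₀ j with hj | hj
  · exact Or.inl (by rw [transport_add_one hj, hα, LinearMap.zero_comp])
  · exact Or.inr (by rw [transport_of_lt hj, hβ, LinearMap.zero_comp])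

@[simp] lemma transportConj_self (p : Module.End R (W i₀)) : transportConj α β i₀ p i₀ = p := by
  simp [transportConj]

variable (hedge : ∀ j, IsInverseOrZero (α j) (β j))
include hedge

lemma comp_eq_id_of_transport_ne_zero {j : ℤ} (h : transport α β i₀ j ≠ 0)
    (h' : transport α β i₀ (j + 1) ≠ 0) :
    β j ∘ₗ α j = LinearMap.id ∧ α j ∘ₗ β j = LinearMap.id :=
  (hedge j).resolve_right fun ⟨hα, hβ⟩ => (transport_eq_zero_of_edge_eq_zero hα hβ).elim h' h

lemma transportBack_comp_transport (j : ℤ) :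
    transportBack α β i₀ j ∘ₗ transport α β i₀ j = LinearMap.id ∨ transport α β i₀ j = 0 := by
  induction j using Int.induction_from i₀ with
  | base => simp
  | up j hj ih =>
    rw [transport_add_one hj, transportBack_add_one hj]
    rcases hedge j with ⟨hβα, -⟩ | ⟨hα, -⟩
    · rw [LinearMap.comp_assoc, ← LinearMap.comp_assoc _ (α j) (β j), hβα, LinearMap.id_comp]
      exact ih.imp_right fun h => by rw [h, LinearMap.comp_zero]
    · simp [hα]
  | down j hj ih =>
    rw [transport_of_lt hj, transportBack_of_lt hj]
    rcases hedge j with ⟨-, hαβ⟩ | ⟨-, hβ⟩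
    · rw [LinearMap.comp_assoc, ← LinearMap.comp_assoc _ (β j) (α j), hαβ, LinearMap.id_comp]
      exact ih.imp_right fun h => by rw [h, LinearMap.comp_zero]
    · simp [hβ]

lemma transportConj_comp_up (p : Module.End R (W i₀)) (j : ℤ) :
    transportConj α β i₀ p (j + 1) ∘ₗ α j = α j ∘ₗ transportConj α β i₀ p j := by
  rcases hedge j with ⟨hβα, hαβ⟩ | ⟨hα, -⟩
  · simp only [transportConj, transport_add_one_of_comp_eq_id hαβ,
      transportBack_add_one_of_comp_eq_id hαβ, LinearMap.comp_assoc, hβα, LinearMap.comp_id]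
  · simp [hα]

lemma transportConj_comp_down (p : Module.End R (W i₀)) (j : ℤ) :
    transportConj α β i₀ p j ∘ₗ β j = β j ∘ₗ transportConj α β i₀ p (j + 1) := by
  rcases hedge j with ⟨hβα, hαβ⟩ | ⟨-, hβ⟩
  · simp only [transportConj, transport_add_one_of_comp_eq_id hαβ,
      transportBack_add_one_of_comp_eq_id hαβ, ← LinearMap.comp_assoc, hβα, LinearMap.id_comp]
  · simp [hβ]

lemma isIdempotentElem_transportConj {p : Module.End R (W i₀)} (hp : IsIdempotentElem p)
    (j : ℤ) : IsIdempotentElem (transportConj α β i₀ p j) := by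
  rcases transportBack_comp_transport (i₀ := i₀) hedge j with h | h
  · have hp' : p ∘ₗ p = p := hp.eq
    simp only [IsIdempotentElem, transportConj, Module.End.mul_eq_comp, LinearMap.comp_assoc]
    rw [← LinearMap.comp_assoc _ (transport α β i₀ j) (transportBack α β i₀ j), h,
      LinearMap.id_comp, ← LinearMap.comp_assoc _ p p, hp']
  · simp [IsIdempotentElem, transportConj, h]

end Transport

section Intervals

lemma exists_withBot_le_iff {s : Set ℤ} (hs : s.Nonempty) :
    ∃ a : WithBot ℤ, ∀ j : ℤ, a ≤ j ↔ ∃ i ∈ s, i ≤ j := by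
  by_cases h : BddBelow s
  · refine ⟨(sInf s : ℤ), fun j => ?_⟩
    rw [WithBot.coe_le_coe]
    exact ⟨fun hj => ⟨_, Int.csInf_mem hs h, hj⟩, fun ⟨i, hi, hij⟩ => (csInf_le h hi).trans hij⟩
  · exact ⟨⊥, fun j => ⟨fun _ => (not_bddBelow_iff.1 h j).imp fun _ hi => ⟨hi.1, hi.2.le⟩,
      fun _ => bot_le⟩⟩

lemma exists_le_withTop_iff {s : Set ℤ} (hs : s.Nonempty) :
    ∃ b : WithTop ℤ, ∀ j : ℤ, j ≤ b ↔ ∃ l ∈ s, j ≤ l := by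
  by_cases h : BddAbove s
  · refine ⟨(sSup s : ℤ), fun j => ?_⟩
    rw [WithTop.coe_le_coe]
    exact ⟨fun hj => ⟨_, Int.csSup_mem hs h, hj⟩, fun ⟨l, hl, hjl⟩ => hjl.trans (le_csSup h hl)⟩
  · exact ⟨⊤, fun j => ⟨fun _ => (not_bddAbove_iff.1 h j).imp fun _ hl => ⟨hl.1, hl.2.le⟩,
      fun _ => le_top⟩⟩

lemma Set.OrdConnected.exists_inIcc_iff {s : Set ℤ} (hs : s.OrdConnected) (hne : s.Nonempty) :
    ∃ (a : WithBot ℤ) (b : WithTop ℤ), ∀ j, inIcc a b j ↔ j ∈ s := by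
  obtain ⟨a, ha⟩ := exists_withBot_le_iff hne
  obtain ⟨b, hb⟩ := exists_le_withTop_iff hne
  refine ⟨a, b, fun j => ?_⟩
  rw [inIcc, ha, hb]
  exact ⟨fun ⟨⟨i, hi, hij⟩, ⟨l, hl, hjl⟩⟩ => hs.out hi hl ⟨hij, hjl⟩,
    fun hj => ⟨⟨j, hj, le_rfl⟩, ⟨j, hj, le_rfl⟩⟩⟩

lemma intervalLE_of_inIcc {a : WithBot ℤ} {b : WithTop ℤ} {i : ℤ} (h : inIcc a b i) :
    intervalLE a b := by
  obtain ⟨ha, hb⟩ := h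
  cases a with
  | bot => exact bot_le
  | coe a =>
    rw [intervalLE, WithBot.map_coe, WithBot.coe_le_coe]
    exact (WithTop.coe_le_coe.2 (WithBot.coe_le_coe.1 ha)).trans hb

end Intervals

structure ZigzagRep.Edges (V : ZigzagRep k) where
  up : ∀ j, V.V j →ₗ[k] V.V (j + 1)
  down : ∀ j, V.V (j + 1) →ₗ[k] V.V j
  g_eq : ∀ j (hj : Odd j), V.g j hj = up j
  f_eq : ∀ j (hj : Odd (j + 1)),
    V.f (j + 1) hj = (LinearEquiv.cast (M := V.V) (by omega : j = j + 1 - 1)).toLinearMap ∘ₗ down j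

def ZigzagHom.ofEdges {X Y : ZigzagRep k} (EX : X.Edges) (EY : Y.Edges)
    (φ : ∀ j, X.V j →ₗ[k] Y.V j) (hup : ∀ j, φ (j + 1) ∘ₗ EX.up j = EY.up j ∘ₗ φ j)
    (hdown : ∀ j, φ j ∘ₗ EX.down j = EY.down j ∘ₗ φ (j + 1)) : ZigzagHom X Y where
  h := φ
  commf i hi := by
    obtain ⟨j, rfl⟩ : ∃ j, i = j + 1 := ⟨i - 1, by ring⟩
    rw [EX.f_eq, EY.f_eq, ← LinearMap.comp_assoc, LinearEquiv.comp_cast_eq_cast_comp,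
      LinearMap.comp_assoc, hdown, LinearMap.comp_assoc]
  commg i hi := by rw [EX.g_eq, EY.g_eq, hup]

lemma ZigzagRep.exists_edges (V : ZigzagRep k)
    (hf : ∀ (i : ℤ) (hi : Odd i), V.f i hi = 0 ∨ Function.Bijective (V.f i hi))
    (hg : ∀ (i : ℤ) (hi : Odd i), V.g i hi = 0 ∨ Function.Bijective (V.g i hi)) :
    ∃ E : V.Edges, ∀ j, IsInverseOrZero (E.up j) (E.down j) := by
  have edge : ∀ j, ∃ (u : V.V j →ₗ[k] V.V (j + 1)) (d : V.V (j + 1) →ₗ[k] V.V j),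
      IsInverseOrZero u d ∧ (∀ hj : Odd j, V.g j hj = u) ∧ ∀ hj : Odd (j + 1),
        V.f (j + 1) hj =
          (LinearEquiv.cast (M := V.V) (by omega : j = j + 1 - 1)).toLinearMap ∘ₗ d := by
    intro j
    rcases Int.even_or_odd j with hj | hj
    · have hj1 : Odd (j + 1) := hj.add_one
      let c := LinearEquiv.cast (R := k) (M := V.V) (by omega : j + 1 - 1 = j)
      let d := c.toLinearMap ∘ₗ V.f (j + 1) hj1
      obtain ⟨u, hu⟩ := exists_isInverseOrZero (α := d)
        ((hf (j + 1) hj1).imp (fun h => by simp [d, h]) c.bijective.comp)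
      refine ⟨u, d, hu.symm, fun h => absurd h (Int.not_odd_iff_even.2 hj), fun _ => ?_⟩
      ext x
      simp [c, d]
    · obtain ⟨d, hd⟩ := exists_isInverseOrZero (hg j hj)
      exact ⟨V.g j hj, d, hd, fun _ => rfl,
        fun h => (Int.not_odd_iff_even.2 (odd_add_one.1 h) hj).elim⟩
  choose up down hinv g_eq f_eq using edge
  exact ⟨⟨up, down, g_eq, f_eq⟩, hinv⟩

lemma offMap_apply_of_pos {P Q : Prop} (hp : P) (v : PLift P → k) (q : PLift Q) :
    offMap k P Q v q = v ⟨hp⟩ :=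
  dif_pos hp

lemma offMap_apply_of_neg {P Q : Prop} (hp : ¬P) (v : PLift P → k) (q : PLift Q) :
    offMap k P Q v q = 0 :=
  dif_neg hp

noncomputable def intervalRep.edges (a : WithBot ℤ) (b : WithTop ℤ) :
    (intervalRep k a b).Edges where
  up j := offMap k (inIcc a b j) (inIcc a b (j + 1))
  down j := offMap k (inIcc a b (j + 1)) (inIcc a b j)
  g_eq _ _ := rfl
  f_eq j _ := (LinearEquiv.cast_comp (W := (intervalRep k a b).V)
    (fun i => offMap k (inIcc a b (j + 1)) (inIcc a b i)) _).symm

lemma pi_comp_eq_offMap_comp_pi {A B : Type*} [AddCommMonoid A] [Module k A] [AddCommMonoid B]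
    [Module k B] {P Q : Prop} (ψ : A →ₗ[k] B) (lA : A →ₗ[k] k) (lB : B →ₗ[k] k)
    (hPQ : P → Q → lB ∘ₗ ψ = lA) (hP : ¬P → Q → lB ∘ₗ ψ = 0) :
    (LinearMap.pi fun _ : PLift Q => lB) ∘ₗ ψ = offMap k P Q ∘ₗ LinearMap.pi fun _ => lA := by
  refine LinearMap.ext fun x => funext fun ⟨q⟩ => ?_
  by_cases hp : P
  · simp only [LinearMap.comp_apply, LinearMap.pi_apply, offMap_apply_of_pos hp]
    exact LinearMap.congr_fun (hPQ hp q) x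
  · simp only [LinearMap.comp_apply, LinearMap.pi_apply, offMap_apply_of_neg hp]
    exact LinearMap.congr_fun (hP hp q) x

lemma nonempty_linearEquiv_of_forall_isIdempotentElem {M : Type*} [AddCommGroup M] [Module k M]
    [Nontrivial M] (h : ∀ p : Module.End k M, IsIdempotentElem p → p = 0 ∨ p = 1) :
    Nonempty (M ≃ₗ[k] k) := by
  obtain ⟨v, hv⟩ := exists_ne (0 : M)
  obtain ⟨l, hl⟩ := Module.Projective.exists_dual_eq_one k hv
  have hspan : ∀ x, l x • v = x := by
    have hp : IsIdempotentElem (l.smulRight v) := LinearMap.ext fun x => by simp [hl]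
    rcases h _ hp with h0 | h1
    · exact absurd (by simpa [hl] using LinearMap.congr_fun h0 v) hv
    · exact fun x => LinearMap.congr_fun h1 x
  refine ⟨LinearEquiv.ofBijective l ⟨fun x y hxy => ?_, fun c => ⟨c • v, by simp [hl]⟩⟩⟩
  rw [← hspan x, ← hspan y, hxy]

lemma bijective_pi_plift {A : Type*} [AddCommMonoid A] [Module k A] {P : Prop} (l : A →ₗ[k] k)
    (hl : P → Bijective l) (hA : ¬P → ∀ x : A, x = 0) :
    Bijective (LinearMap.pi fun _ : PLift P => l) := by
  by_cases hP : P
  · refine ⟨fun x y hxy => (hl hP).injective (congrFun hxy ⟨hP⟩), fun w => ?_⟩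
    obtain ⟨x, hx⟩ := (hl hP).surjective (w ⟨hP⟩)
    exact ⟨x, funext fun _ => hx⟩
  · exact ⟨fun x y _ => (hA hP x).trans (hA hP y).symm,
      fun _ => ⟨0, funext fun q => absurd q.down hP⟩⟩

namespace ZigzagRep.Indecomposable

variable {V : ZigzagRep k} (hV : V.Indecomposable) (E : V.Edges)
  (hE : ∀ j, IsInverseOrZero (E.up j) (E.down j))
include hV hE

lemma transportConj_eq_zero_or_id {i₀ : ℤ} {p : Module.End k (V.V i₀)}
    (hp : IsIdempotentElem p) :
    (∀ j, transportConj E.up E.down i₀ p j = 0) ∨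
      ∀ j, transportConj E.up E.down i₀ p j = LinearMap.id :=
  hV.2 (ZigzagHom.ofEdges E E _ (transportConj_comp_up hE p) (transportConj_comp_down hE p))
    fun j => (isIdempotentElem_transportConj hE hp j).eq

lemma eq_zero_or_one_of_isIdempotentElem {i₀ : ℤ} {p : Module.End k (V.V i₀)}
    (hp : IsIdempotentElem p) : p = 0 ∨ p = 1 := by
  simpa [Module.End.one_eq_id] using (hV.transportConj_eq_zero_or_id E hE hp).imp (· i₀) (· i₀)

lemma transport_comp_transportBack {i₀ : ℤ} [Nontrivial (V.V i₀)] (j : ℤ) :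
    transport E.up E.down i₀ j ∘ₗ transportBack E.up E.down i₀ j = LinearMap.id := by
  rcases hV.transportConj_eq_zero_or_id E hE (IsIdempotentElem.one (M := Module.End k (V.V i₀)))
    with h0 | h1
  · exact absurd ((transportConj_self _).symm.trans (h0 i₀)) one_ne_zero
  · simpa [transportConj, Module.End.one_eq_id] using h1 j

lemma exists_hom_intervalRep_bijective {i₀ : ℤ} [Nontrivial (V.V i₀)] (e : V.V i₀ ≃ₗ[k] k)
    {a : WithBot ℤ} {b : WithTop ℤ}
    (hab : ∀ j, inIcc a b j ↔ transport E.up E.down i₀ j ≠ 0) :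
    ∃ φ : ZigzagHom V (intervalRep k a b), ∀ j, Bijective (φ.h j) := by
  have hTS := hV.transport_comp_transportBack E hE (i₀ := i₀)
  set T := transport E.up E.down i₀
  set S := transportBack E.up E.down i₀
  have hzero : ∀ j, ¬inIcc a b j → ∀ x : V.V j, x = 0 := fun j hj x => by
    rw [← LinearMap.id_apply (R := k) x, ← hTS j, not_not.1 ((hab j).not.1 hj),
      LinearMap.zero_comp, LinearMap.zero_apply]
  have hinv : ∀ j, inIcc a b j → inIcc a b (j + 1) →
      E.down j ∘ₗ E.up j = LinearMap.id ∧ E.up j ∘ₗ E.down j = LinearMap.id := fun j h h' =>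
    comp_eq_id_of_transport_ne_zero hE ((hab j).1 h) ((hab _).1 h')
  refine ⟨ZigzagHom.ofEdges E (intervalRep.edges a b)
    (fun j => LinearMap.pi fun _ => e.toLinearMap ∘ₗ S j)
    (fun j => pi_comp_eq_offMap_comp_pi _ _ _ (fun h h' => ?_) fun h _ => ?_)
    (fun j => pi_comp_eq_offMap_comp_pi _ _ _ (fun h h' => ?_) fun h _ => ?_),
    fun j => bijective_pi_plift _ (fun hj => e.bijective.comp ?_) (hzero j)⟩
  · rw [LinearMap.comp_assoc, transportBack_add_one_comp (hinv j h h').1]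
  · exact LinearMap.ext fun x => by rw [hzero j h x, map_zero, map_zero]
  · rw [LinearMap.comp_assoc, ← transportBack_add_one_of_comp_eq_id (hinv j h' h).2]
  · exact LinearMap.ext fun x => by rw [hzero (j + 1) h x, map_zero, map_zero]
  · have hST := (transportBack_comp_transport hE j).resolve_right ((hab j).1 hj)
    exact bijective_iff_has_inverse.2
      ⟨T j, LinearMap.congr_fun (hTS j), LinearMap.congr_fun hST⟩

end ZigzagRep.Indecomposable

/-- Let `V` be a representation of the zigzag quiver `A∞∞` over a field
`k`.  If every nonzero structure map of `V` is bijective and `V` is indecomposable, then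
`V` is isomorphic to an interval representation `k_{ab}` for some `a ≤ b` in `ℤ ∪ {±∞}`. -/
theorem indecomposable_with_bijective_maps_is_interval (k : Type) [Field k]
    (V : ZigzagRep k)
    (hf : ∀ (i : ℤ) (hi : Odd i), V.f i hi = 0 ∨ Function.Bijective (V.f i hi))
    (hg : ∀ (i : ℤ) (hi : Odd i), V.g i hi = 0 ∨ Function.Bijective (V.g i hi))
    (hV : V.Indecomposable) :
    ∃ (a : WithBot ℤ) (b : WithTop ℤ), intervalLE a b ∧
      ∃ φ : ZigzagHom V (intervalRep k a b), ∀ i, Function.Bijective (φ.h i) := by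
  obtain ⟨i₀, v₀, hv₀⟩ := hV.1
  have : Nontrivial (V.V i₀) := ⟨⟨v₀, 0, hv₀⟩⟩
  obtain ⟨E, hE⟩ := V.exists_edges hf hg
  obtain ⟨e⟩ := nonempty_linearEquiv_of_forall_isIdempotentElem (M := V.V i₀) fun _ hp =>
    hV.eq_zero_or_one_of_isIdempotentElem E hE hp
  have hi₀ : transport E.up E.down i₀ i₀ ≠ 0 := by
    rw [transport_self, ← Module.End.one_eq_id]
    exact one_ne_zero
  obtain ⟨a, b, hab⟩ :=
    (ordConnected_transport_ne_zero (α := E.up) (β := E.down)).exists_inIcc_iff ⟨i₀, hi₀⟩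
  exact ⟨a, b, intervalLE_of_inIcc ((hab i₀).2 hi₀),
    hV.exists_hom_intervalRep_bijective E hE e hab⟩
end

section
/- Let A be an artin algebra with rad²(A) = 0, J = rad A, and A^s = (A/J, 0; J, A/J). The functor S : Mod A → Mod A^s sending M to the column (M/JM; JM) satisfies: M ≅ N if and only if S(M) ≅ S(N). -/
/-!
An `A^s`-isomorphism `S(M) ≅ S(N)` is the same as a pair of isomorphisms `f₀ : M/JM ≅ N/JN`,
`f₁ : JM ≅ JN` with `f₁ (j m) = j n` whenever `f₀ m̄ = n̄`; since `J² = 0`, an isomorphism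
`M ≅ N` induces such a pair. Conversely, given such a pair, let `P ⊆ M × N` be the preimage of
the graph of `f₀` and `G ⊆ P` the graph of `f₁`. Compatibility says `J • P ⊆ G`, so `P/G` is
semisimple (`A` is artinian) and the image of `JM × JN` in it has a complement. Its preimage
`C ⊆ P` is complementary to both `ker fst` and `ker snd`, so `M ≅ C ≅ N`.
-/

/-- The Jacobson radical `J = rad A` of a ring, as a module over `A`. -/
abbrev JacMod (A : Type) [Ring A] : Type := ↥(Ideal.jacobson (⊥ : Ideal A))

/-- The separated algebra `A^s = (A/J, 0; J, A/J)` of a radical square zero artin algebra,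
realized as the trivial square-zero extension of `(A/J) × (A/J)` by the bimodule `J`
(the left action through the second factor, the right action through the first factor,
corresponding to lower-triangular 2×2 matrix multiplication). -/
abbrev SepAlg (A : Type) [Ring A] (S : Type) [Ring S]
    [Module (S × S) (JacMod A)] [Module (S × S)ᵐᵒᵖ (JacMod A)]
    [SMulCommClass (S × S) (S × S)ᵐᵒᵖ (JacMod A)] : Type :=
  TrivSqZeroExt (S × S) (JacMod A)

/-- The submodule `JM ⊆ M` generated by the elements `j • m`, `j ∈ J = rad A`. -/
noncomputable def radSubmodule (A : Type) [Ring A] (M : Type) [AddCommGroup M]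
    [Module A M] : Submodule A M :=
  Submodule.span A {x : M | ∃ j ∈ Ideal.jacobson (⊥ : Ideal A), ∃ m : M, j • m = x}

/-- The underlying abelian group of the separated module `S(M) = (M/JM; JM)`. -/
abbrev SepMod (A : Type) [Ring A] (M : Type) [AddCommGroup M] [Module A M] : Type :=
  (M ⧸ radSubmodule A M) × ↥(radSubmodule A M)

open Submodule LinearMap

theorem isSemisimpleModule_of_isTorsionBySet_jacobson {A M : Type*} [Ring A]
    [IsSemiprimaryRing A] [AddCommGroup M] [Module A M]
    (h : Module.IsTorsionBySet A M (Ring.jacobson A)) : IsSemisimpleModule A M :=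
  let _ := h.module
  (h.semilinearMap.isSemisimpleModule_iff_of_bijective Function.bijective_id).2 inferInstance

theorem nonempty_linearEquiv_of_isCompl_ker {A E M N : Type*} [Ring A] [AddCommGroup E]
    [Module A E] [AddCommGroup M] [Module A M] [AddCommGroup N] [Module A N]
    {f : E →ₗ[A] M} {g : E →ₗ[A] N} (hf : Function.Surjective f) (hg : Function.Surjective g)
    {C : Submodule A E} (hCf : IsCompl C (ker f)) (hCg : IsCompl C (ker g)) :
    Nonempty (M ≃ₗ[A] N) :=
  ⟨(f.quotKerEquivOfSurjective hf).symm ≪≫ₗ quotientEquivOfIsCompl _ _ hCf.symm ≪≫ₗ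
    (quotientEquivOfIsCompl _ _ hCg.symm).symm ≪≫ₗ g.quotKerEquivOfSurjective hg⟩

theorem Submodule.isCompl_comap_mkQ_of_isCompl_map_mkQ {A E : Type*} [Ring A] [AddCommGroup E]
    [Module A E] {G D K : Submodule A E} (hKD : K ≤ D) (hGK : Disjoint G K) (hD : D ≤ G ⊔ K)
    {C₀ : Submodule A (E ⧸ G)} (hC₀ : IsCompl (D.map G.mkQ) C₀) :
    IsCompl (C₀.comap G.mkQ) K := by
  constructor
  · rw [Submodule.disjoint_def]
    intro x hxC hxK
    have hx : G.mkQ x = 0 :=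
      (Submodule.disjoint_def.1 hC₀.disjoint) _ (mem_map_of_mem (hKD hxK)) hxC
    exact (Submodule.disjoint_def.1 hGK) x ((Quotient.mk_eq_zero G).1 hx) hxK
  · rw [codisjoint_iff, eq_top_iff]
    intro x _
    obtain ⟨_, ⟨d, hd, rfl⟩, c, hc, hdc⟩ :=
      mem_sup.1 (hC₀.codisjoint.eq_top ▸ mem_top (x := G.mkQ x))
    obtain ⟨g, hg, k, hk, rfl⟩ := mem_sup.1 (hD hd)
    have hxC : x - k ∈ C₀.comap G.mkQ := by
      have hg0 : G.mkQ g = 0 := (Quotient.mk_eq_zero G).2 hg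
      rw [mem_comap, map_sub, ← hdc, map_add, hg0, zero_add, add_sub_cancel_left]
      exact hc
    simpa using add_mem_sup hxC hk

theorem AddEquiv.exists_linearEquiv_prodCongr {B X₁ Y₁ X₂ Y₂ : Type*} [Ring B]
    [AddCommGroup X₁] [Module B X₁] [AddCommGroup Y₁] [Module B Y₁]
    [AddCommGroup X₂] [Module B X₂] [AddCommGroup Y₂] [Module B Y₂]
    (φ : (X₁ × Y₁) ≃+ (X₂ × Y₂))
    (hφ : ∀ (a b : B) (p : X₁ × Y₁), φ (a • p.1, b • p.2) = (a • (φ p).1, b • (φ p).2)) :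
    ∃ (f₀ : X₁ ≃ₗ[B] X₂) (f₁ : Y₁ ≃ₗ[B] Y₂), ∀ p, φ p = (f₀ p.1, f₁ p.2) := by
  have hφ_symm (a b : B) (q : X₂ × Y₂) :
      φ.symm (a • q.1, b • q.2) = (a • (φ.symm q).1, b • (φ.symm q).2) :=
    φ.injective (by rw [hφ, φ.apply_symm_apply, φ.apply_symm_apply])
  let Φ : (X₁ × Y₁) ≃ₗ[B] (X₂ × Y₂) := { φ with map_smul' := fun a p ↦ hφ a a p }
  have hΦ : ⇑Φ = φ := rfl
  have hΦ_symm : ⇑Φ.symm = φ.symm := rfl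
  have h_inl (x : X₁) : φ (x, 0) = ((φ (x, 0)).1, 0) := by simpa using hφ 1 0 (x, 0)
  have h_inr (y : Y₁) : φ (0, y) = (0, (φ (0, y)).2) := by simpa using hφ 0 1 (0, y)
  have h_symm_inl (x : X₂) : φ.symm (x, 0) = ((φ.symm (x, 0)).1, 0) := by
    simpa using hφ_symm 1 0 (x, 0)
  have h_symm_inr (y : Y₂) : φ.symm (0, y) = (0, (φ.symm (0, y)).2) := by
    simpa using hφ_symm 0 1 (0, y)
  refine ⟨.ofLinearMap (.fst B X₂ Y₂ ∘ₗ Φ ∘ₗ .inl B X₁ Y₁) (.fst B X₁ Y₁ ∘ₗ Φ.symm ∘ₗ .inl B X₂ Y₂)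
      ?_ ?_, .ofLinearMap (.snd B X₂ Y₂ ∘ₗ Φ ∘ₗ .inr B X₁ Y₁)
      (.snd B X₁ Y₁ ∘ₗ Φ.symm ∘ₗ .inr B X₂ Y₂) ?_ ?_, fun p ↦ ?_⟩
  · ext x; simp [hΦ, hΦ_symm, ← h_symm_inl]
  · ext x; simp [hΦ, hΦ_symm, ← h_inl]
  · ext y; simp [hΦ, hΦ_symm, ← h_symm_inr]
  · ext y; simp [hΦ, hΦ_symm, ← h_inr]
  · have hp : φ p = φ (p.1, 0) + φ (0, p.2) := by
      rw [← map_add, Prod.mk_add_mk, add_zero, zero_add]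
    rw [hp, h_inl, h_inr]
    simp [hΦ]

section Pullback

variable {A M N : Type*} [Ring A] [AddCommGroup M] [Module A M] [AddCommGroup N] [Module A N]
  {M' : Submodule A M} {N' : Submodule A N}

def quotPullback (f₀ : (M ⧸ M') ≃ₗ[A] (N ⧸ N')) : Submodule A (M × N) :=
  (graph (f₀ : (M ⧸ M') →ₗ[A] (N ⧸ N'))).comap (M'.mkQ.prodMap N'.mkQ)

theorem mem_quotPullback {f₀ : (M ⧸ M') ≃ₗ[A] (N ⧸ N')} {x : M × N} :
    x ∈ quotPullback f₀ ↔ N'.mkQ x.2 = f₀ (M'.mkQ x.1) :=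
  Iff.rfl

def submoduleGraph (f₁ : M' ≃ₗ[A] N') : Submodule A (M × N) :=
  range (M'.subtype.prod (N'.subtype ∘ₗ f₁.toLinearMap))

variable (f₀ : (M ⧸ M') ≃ₗ[A] (N ⧸ N')) (f₁ : M' ≃ₗ[A] N')

def pullbackGraph : Submodule A (quotPullback f₀) :=
  (submoduleGraph f₁).comap (quotPullback f₀).subtype

def pullbackProd : Submodule A (quotPullback f₀) :=
  (M'.prod N').comap (quotPullback f₀).subtype

theorem submoduleGraph_le_quotPullback : submoduleGraph f₁ ≤ quotPullback f₀ := by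
  rintro _ ⟨u, rfl⟩
  simp [mem_quotPullback, (Quotient.mk_eq_zero _).2 u.2, (Quotient.mk_eq_zero _).2 (f₁ u).2]

theorem fst_comp_quotPullback_subtype_surjective :
    Function.Surjective (fst A M N ∘ₗ (quotPullback f₀).subtype) := by
  intro m
  obtain ⟨n, hn⟩ := N'.mkQ_surjective (f₀ (M'.mkQ m))
  exact ⟨⟨(m, n), hn⟩, rfl⟩

theorem snd_comp_quotPullback_subtype_surjective :
    Function.Surjective (snd A M N ∘ₗ (quotPullback f₀).subtype) := by
  intro n
  obtain ⟨m, hm⟩ := M'.mkQ_surjective (f₀.symm (N'.mkQ n))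
  exact ⟨⟨(m, n), by rw [mem_quotPullback, hm, LinearEquiv.apply_symm_apply]⟩, rfl⟩

theorem isCompl_ker_fst_comp_quotPullback_subtype
    {C₀ : Submodule A (quotPullback f₀ ⧸ pullbackGraph f₀ f₁)}
    (hC₀ : IsCompl ((pullbackProd f₀).map (pullbackGraph f₀ f₁).mkQ) C₀) :
    IsCompl (C₀.comap (pullbackGraph f₀ f₁).mkQ)
      (ker (fst A M N ∘ₗ (quotPullback f₀).subtype)) := by
  refine isCompl_comap_mkQ_of_isCompl_map_mkQ ?_ ?_ ?_ hC₀
  · rintro ⟨⟨m, n⟩, hx⟩ (rfl : m = 0)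
    rw [mem_quotPullback, map_zero, map_zero, mkQ_apply, Quotient.mk_eq_zero] at hx
    exact ⟨M'.zero_mem, hx⟩
  · rw [Submodule.disjoint_def]
    rintro ⟨x, hxP⟩ ⟨u, hu : ((u : M), (f₁ u : N)) = x⟩ (hx : x.1 = 0)
    obtain rfl : u = 0 := by simpa [← hu] using hx
    simp [← hu]
  · rintro x ⟨h₁, -⟩
    let g : quotPullback f₀ := ⟨_, submoduleGraph_le_quotPullback f₀ f₁ ⟨⟨_, h₁⟩, rfl⟩⟩
    refine mem_sup.2 ⟨g, ⟨_, rfl⟩, x - g, ?_, add_sub_cancel g x⟩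
    simp [g]

theorem isCompl_ker_snd_comp_quotPullback_subtype
    {C₀ : Submodule A (quotPullback f₀ ⧸ pullbackGraph f₀ f₁)}
    (hC₀ : IsCompl ((pullbackProd f₀).map (pullbackGraph f₀ f₁).mkQ) C₀) :
    IsCompl (C₀.comap (pullbackGraph f₀ f₁).mkQ)
      (ker (snd A M N ∘ₗ (quotPullback f₀).subtype)) := by
  refine isCompl_comap_mkQ_of_isCompl_map_mkQ ?_ ?_ ?_ hC₀
  · rintro ⟨⟨m, n⟩, hx⟩ (rfl : n = 0)
    rw [mem_quotPullback, map_zero, eq_comm, LinearEquiv.map_eq_zero_iff, mkQ_apply,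
      Quotient.mk_eq_zero] at hx
    exact ⟨hx, N'.zero_mem⟩
  · rw [Submodule.disjoint_def]
    rintro ⟨x, hxP⟩ ⟨u, hu : ((u : M), (f₁ u : N)) = x⟩ (hx : x.2 = 0)
    obtain rfl : u = 0 := by simpa [← hu] using hx
    simp [← hu]
  · rintro x ⟨-, h₂⟩
    let g : quotPullback f₀ := ⟨_, submoduleGraph_le_quotPullback f₀ f₁ ⟨f₁.symm ⟨_, h₂⟩, rfl⟩⟩
    refine mem_sup.2 ⟨g, ⟨_, rfl⟩, x - g, ?_, add_sub_cancel g x⟩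
    simp [g]

theorem nonempty_linearEquiv_of_jacobson_smul_mem_submoduleGraph [IsSemiprimaryRing A]
    (h : ∀ x ∈ quotPullback f₀, ∀ j ∈ Ring.jacobson A, j • x ∈ submoduleGraph f₁) :
    Nonempty (M ≃ₗ[A] N) := by
  have : IsSemisimpleModule A (quotPullback f₀ ⧸ pullbackGraph f₀ f₁) :=
    isSemisimpleModule_of_isTorsionBySet_jacobson
      ((Module.isTorsionBySet_quotient_iff _ _).2 fun x j hj ↦ h x x.2 j hj)
  obtain ⟨C₀, hC₀⟩ := exists_isCompl ((pullbackProd f₀).map (pullbackGraph f₀ f₁).mkQ)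
  exact nonempty_linearEquiv_of_isCompl_ker (fst_comp_quotPullback_subtype_surjective f₀)
    (snd_comp_quotPullback_subtype_surjective f₀)
    (isCompl_ker_fst_comp_quotPullback_subtype f₀ f₁ hC₀)
    (isCompl_ker_snd_comp_quotPullback_subtype f₀ f₁ hC₀)

end Pullback

section Radical

variable {A : Type} [Ring A] {M N : Type} [AddCommGroup M] [Module A M]
  [AddCommGroup N] [Module A N]

theorem smul_mem_radSubmodule {j : A} (hj : j ∈ Ideal.jacobson (⊥ : Ideal A)) (m : M) :
    j • m ∈ radSubmodule A M :=
  subset_span ⟨j, hj, m, rfl⟩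

theorem map_radSubmodule_le (f : M →ₗ[A] N) : (radSubmodule A M).map f ≤ radSubmodule A N := by
  rw [radSubmodule, Submodule.map_span, span_le]
  rintro _ ⟨_, ⟨j, hj, m, rfl⟩, rfl⟩
  rw [map_smul]
  exact smul_mem_radSubmodule hj (f m)

theorem map_radSubmodule_eq (e : M ≃ₗ[A] N) :
    (radSubmodule A M).map (e : M →ₗ[A] N) = radSubmodule A N := by
  refine (map_radSubmodule_le _).antisymm fun n hn ↦ ⟨e.symm n, ?_, e.apply_symm_apply n⟩
  exact map_radSubmodule_le (e.symm : N →ₗ[A] M) (mem_map_of_mem hn)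

theorem smul_eq_zero_of_mem_radSubmodule
    (hJ2 : ∀ x ∈ Ideal.jacobson (⊥ : Ideal A), ∀ y ∈ Ideal.jacobson (⊥ : Ideal A), x * y = 0)
    {j : A} (hj : j ∈ Ideal.jacobson (⊥ : Ideal A)) {u : M} (hu : u ∈ radSubmodule A M) :
    j • u = 0 := by
  induction hu using span_induction generalizing j with
  | mem x hx =>
    obtain ⟨j', hj', m, rfl⟩ := hx
    rw [smul_smul, hJ2 j hj j' hj', zero_smul]
  | zero => exact smul_zero j
  | add x y _ _ hx hy => rw [smul_add, hx hj, hy hj, add_zero]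
  | smul a x _ hx => rw [smul_smul, hx (Ideal.mul_mem_right a _ hj)]

def RadCompatible (f₀ : (M ⧸ radSubmodule A M) ≃ₗ[A] (N ⧸ radSubmodule A N))
    (f₁ : radSubmodule A M ≃ₗ[A] radSubmodule A N) : Prop :=
  ∀ (j : A) (hj : j ∈ Ideal.jacobson (⊥ : Ideal A)) (m : M) (n : N),
    f₀ (Submodule.Quotient.mk m) = Submodule.Quotient.mk n →
      (f₁ ⟨j • m, smul_mem_radSubmodule hj m⟩ : N) = j • n

theorem exists_radCompatible_of_linearEquiv
    (hJ2 : ∀ x ∈ Ideal.jacobson (⊥ : Ideal A), ∀ y ∈ Ideal.jacobson (⊥ : Ideal A), x * y = 0)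
    (e : M ≃ₗ[A] N) :
    ∃ (f₀ : (M ⧸ radSubmodule A M) ≃ₗ[A] (N ⧸ radSubmodule A N))
      (f₁ : radSubmodule A M ≃ₗ[A] radSubmodule A N), RadCompatible f₀ f₁ := by
  refine ⟨Quotient.equiv _ _ e (map_radSubmodule_eq e),
    e.ofSubmodules _ _ (map_radSubmodule_eq e), fun j hj m n hmn ↦ ?_⟩
  have hn : e m - n ∈ radSubmodule A N := (Submodule.Quotient.eq _).1 hmn
  show e (j • m) = j • n
  rw [map_smul, ← sub_eq_zero, ← smul_sub]
  exact smul_eq_zero_of_mem_radSubmodule hJ2 hj hn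

theorem RadCompatible.nonempty_linearEquiv [IsArtinianRing A]
    {f₀ : (M ⧸ radSubmodule A M) ≃ₗ[A] (N ⧸ radSubmodule A N)}
    {f₁ : radSubmodule A M ≃ₗ[A] radSubmodule A N} (h : RadCompatible f₀ f₁) :
    Nonempty (M ≃ₗ[A] N) := by
  refine nonempty_linearEquiv_of_jacobson_smul_mem_submoduleGraph f₀ f₁ fun x hx j hj ↦ ?_
  rw [← Ideal.jacobson_bot] at hj
  unfold RadCompatible at h
  exact ⟨⟨j • x.1, smul_mem_radSubmodule hj x.1⟩, Prod.ext rfl (h j hj x.1 x.2 hx.symm)⟩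

end Radical

section Separated

variable {A S : Type} [Ring A] [Ring S] [Module (S × S) (JacMod A)]
  [Module (S × S)ᵐᵒᵖ (JacMod A)] [SMulCommClass (S × S) (S × S)ᵐᵒᵖ (JacMod A)]
  {M N : Type} [AddCommGroup M] [Module A M] [AddCommGroup N] [Module A N]

structure IsSepAction (π : A →+* S) (M : Type) [AddCommGroup M] [Module A M]
    [Module (SepAlg A S) (SepMod A M)] : Prop where
  inl_smul : ∀ (x y : A) (p : SepMod A M),
    (TrivSqZeroExt.inl ((π x, π y) : S × S) : SepAlg A S) • p = (x • p.1, y • p.2)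
  inr_smul_mk : ∀ (j : JacMod A) (m : M) (u : radSubmodule A M),
    (TrivSqZeroExt.inr j : SepAlg A S) • ((Submodule.Quotient.mk m, u) : SepMod A M) =
      (0, ⟨(j : A) • m, smul_mem_radSubmodule j.2 m⟩)

variable {π : A →+* S} [Module (SepAlg A S) (SepMod A M)] [Module (SepAlg A S) (SepMod A N)]

theorem RadCompatible.nonempty_sepMod_equiv (hπ : Function.Surjective π)
    (hM : IsSepAction π M) (hN : IsSepAction π N)
    {f₀ : (M ⧸ radSubmodule A M) ≃ₗ[A] (N ⧸ radSubmodule A N)}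
    {f₁ : radSubmodule A M ≃ₗ[A] radSubmodule A N} (h : RadCompatible f₀ f₁) :
    Nonempty (SepMod A M ≃ₗ[SepAlg A S] SepMod A N) := by
  refine ⟨{ f₀.prodCongr f₁ with map_smul' := fun z p ↦ ?_ }⟩
  change f₀.prodCongr f₁ (z • p) = z • f₀.prodCongr f₁ p
  obtain ⟨x, hx⟩ := hπ z.fst.1
  obtain ⟨y, hy⟩ := hπ z.fst.2
  obtain ⟨q, u⟩ := p
  obtain ⟨m, rfl⟩ := Submodule.Quotient.mk_surjective _ q
  obtain ⟨n, hn⟩ := Submodule.Quotient.mk_surjective _ (f₀ (Submodule.Quotient.mk m))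
  rw [← TrivSqZeroExt.inl_fst_add_inr_snd_eq z, add_smul, add_smul, map_add,
    ← Prod.mk.eta (p := z.fst), ← hx, ← hy, hM.inl_smul, hN.inl_smul, hM.inr_smul_mk]
  simp only [LinearEquiv.prodCongr_apply, map_smul, ← hn, hN.inr_smul_mk, map_zero]
  unfold RadCompatible at h
  congr 2
  exact Subtype.ext (h _ z.snd.2 m n hn.symm)

theorem exists_radCompatible_of_sepMod_equiv (hM : IsSepAction π M) (hN : IsSepAction π N)
    (φ : SepMod A M ≃ₗ[SepAlg A S] SepMod A N) :
    ∃ (f₀ : (M ⧸ radSubmodule A M) ≃ₗ[A] (N ⧸ radSubmodule A N))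
      (f₁ : radSubmodule A M ≃ₗ[A] radSubmodule A N), RadCompatible f₀ f₁ := by
  obtain ⟨f₀, f₁, hφ⟩ := AddEquiv.exists_linearEquiv_prodCongr (B := A) φ.toAddEquiv
    fun x y p ↦ by
      simpa [hM.inl_smul, hN.inl_smul] using map_smul φ (TrivSqZeroExt.inl ((π x, π y) : S × S)) p
  refine ⟨f₀, f₁, fun j hj m n hmn ↦ ?_⟩
  have := map_smul φ (TrivSqZeroExt.inr ⟨j, hj⟩ : SepAlg A S) (Submodule.Quotient.mk m, 0)
  replace hφ : ∀ p, φ p = (f₀ p.1, f₁ p.2) := hφ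
  rw [hM.inr_smul_mk, hφ, hφ] at this
  simp only [map_zero, hmn, hN.inr_smul_mk] at this
  exact congrArg (Subtype.val ∘ Prod.snd) this

end Separated

theorem separated_functor_reflects_isomorphism_general
    (R : Type) [CommRing R] [IsArtinianRing R]
    (A : Type) [Ring A] [Algebra R A] [Module.Finite R A]
    (hJ2 : ∀ x ∈ Ideal.jacobson (⊥ : Ideal A), ∀ y ∈ Ideal.jacobson (⊥ : Ideal A),
      x * y = 0)
    (S : Type) [Ring S] (π : A →+* S) (hπ : Function.Surjective π)
    [Module (S × S) (JacMod A)] [Module (S × S)ᵐᵒᵖ (JacMod A)]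
    [SMulCommClass (S × S) (S × S)ᵐᵒᵖ (JacMod A)]
    -- the `A`-modules `M` and `N` and the `A^s`-module structures on `S(M)`, `S(N)`
    (M : Type) [AddCommGroup M] [Module A M]
    (N : Type) [AddCommGroup N] [Module A N]
    [Module (SepAlg A S) (SepMod A M)] [Module (SepAlg A S) (SepMod A N)]
    (hM1 : ∀ (x y : A) (p : SepMod A M),
      (TrivSqZeroExt.inl ((π x, π y) : S × S) : SepAlg A S) • p = (x • p.1, y • p.2))
    (hM2 : ∀ (j : JacMod A) (m : M) (u : ↥(radSubmodule A M)),
      ((TrivSqZeroExt.inr j : SepAlg A S) •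
          ((Submodule.Quotient.mk m, u) : SepMod A M)).1 = 0 ∧
      ((((TrivSqZeroExt.inr j : SepAlg A S) •
          ((Submodule.Quotient.mk m, u) : SepMod A M)).2 : M)) = (j : A) • m)
    (hN1 : ∀ (x y : A) (p : SepMod A N),
      (TrivSqZeroExt.inl ((π x, π y) : S × S) : SepAlg A S) • p = (x • p.1, y • p.2))
    (hN2 : ∀ (j : JacMod A) (n : N) (u : ↥(radSubmodule A N)),
      ((TrivSqZeroExt.inr j : SepAlg A S) •
          ((Submodule.Quotient.mk n, u) : SepMod A N)).1 = 0 ∧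
      ((((TrivSqZeroExt.inr j : SepAlg A S) •
          ((Submodule.Quotient.mk n, u) : SepMod A N)).2 : N)) = (j : A) • n) :
    Nonempty (M ≃ₗ[A] N) ↔
      Nonempty ((SepMod A M) ≃ₗ[SepAlg A S] (SepMod A N)) := by
  have hMs : IsSepAction π M :=
    ⟨hM1, fun j m u ↦ Prod.ext (hM2 j m u).1 (Subtype.ext (hM2 j m u).2)⟩
  have hNs : IsSepAction π N :=
    ⟨hN1, fun j n u ↦ Prod.ext (hN2 j n u).1 (Subtype.ext (hN2 j n u).2)⟩
  have : IsArtinianRing A := IsArtinianRing.of_finite R A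
  constructor
  · rintro ⟨e⟩
    obtain ⟨f₀, f₁, h⟩ := exists_radCompatible_of_linearEquiv hJ2 e
    exact h.nonempty_sepMod_equiv hπ hMs hNs
  · rintro ⟨φ⟩
    obtain ⟨f₀, f₁, h⟩ := exists_radCompatible_of_sepMod_equiv hMs hNs φ
    exact h.nonempty_linearEquiv

/-- Let `A` be an artin algebra with `rad² A = 0`, `J = rad A`, and
`A^s = (A/J, 0; J, A/J)`.  The functor `S : Mod A → Mod A^s`, `M ↦ (M/JM; JM)` (where the
`A^s`-action is `(x,y;j) • (m̄, u) = (x m̄, y u + j m̄)`), satisfies: `M ≅ N` if and only if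
`S(M) ≅ S(N)`. -/
theorem separated_functor_reflects_isomorphism
    (R : Type) [CommRing R] [IsArtinianRing R]
    (A : Type) [Ring A] [Algebra R A] [Module.Finite R A]
    (hJ2 : ∀ x ∈ Ideal.jacobson (⊥ : Ideal A), ∀ y ∈ Ideal.jacobson (⊥ : Ideal A),
      x * y = 0)
    (S : Type) [Ring S] (π : A →+* S) (hπ : Function.Surjective π)
    (hker : ∀ a : A, π a = 0 ↔ a ∈ Ideal.jacobson (⊥ : Ideal A))
    [Module (S × S) (JacMod A)] [Module (S × S)ᵐᵒᵖ (JacMod A)]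
    [SMulCommClass (S × S) (S × S)ᵐᵒᵖ (JacMod A)]
    (hL : ∀ (x y : A) (m : JacMod A),
      ((((π x, π y) : S × S) • m : JacMod A) : A) = y * (m : A))
    (hR : ∀ (x y : A) (m : JacMod A),
      (((MulOpposite.op ((π x, π y) : S × S)) • m : JacMod A) : A) = (m : A) * x)
    -- the `A`-modules `M` and `N` and the `A^s`-module structures on `S(M)`, `S(N)`
    (M : Type) [AddCommGroup M] [Module A M]
    (N : Type) [AddCommGroup N] [Module A N]
    [Module (SepAlg A S) (SepMod A M)] [Module (SepAlg A S) (SepMod A N)]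
    (hM1 : ∀ (x y : A) (p : SepMod A M),
      (TrivSqZeroExt.inl ((π x, π y) : S × S) : SepAlg A S) • p = (x • p.1, y • p.2))
    (hM2 : ∀ (j : JacMod A) (m : M) (u : ↥(radSubmodule A M)),
      ((TrivSqZeroExt.inr j : SepAlg A S) •
          ((Submodule.Quotient.mk m, u) : SepMod A M)).1 = 0 ∧
      ((((TrivSqZeroExt.inr j : SepAlg A S) •
          ((Submodule.Quotient.mk m, u) : SepMod A M)).2 : M)) = (j : A) • m)
    (hN1 : ∀ (x y : A) (p : SepMod A N),
      (TrivSqZeroExt.inl ((π x, π y) : S × S) : SepAlg A S) • p = (x • p.1, y • p.2))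
    (hN2 : ∀ (j : JacMod A) (n : N) (u : ↥(radSubmodule A N)),
      ((TrivSqZeroExt.inr j : SepAlg A S) •
          ((Submodule.Quotient.mk n, u) : SepMod A N)).1 = 0 ∧
      ((((TrivSqZeroExt.inr j : SepAlg A S) •
          ((Submodule.Quotient.mk n, u) : SepMod A N)).2 : N)) = (j : A) • n) :
    Nonempty (M ≃ₗ[A] N) ↔
      Nonempty ((SepMod A M) ≃ₗ[SepAlg A S] (SepMod A N)) :=
  separated_functor_reflects_isomorphism_general R A hJ2 S π hπ M N hM1 hM2 hN1 hN2
end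

section
/- Let A be a symmetric finite dimensional k-algebra (so D(A) ≅ A as A-A-bimodules). Then the category of (cochain) complexes of A-modules C(Mod A) is equivalent to the category of ℤ-graded modules over the trivial extension T(A) = A ⋉ D(A). -/
open CategoryTheory

/-- A ℤ-graded module over the trivial extension `T(A) = A ⋉ D(A)` of a finite dimensional
`k`-algebra `A`: a family `M = ⊕_{i} M_i` of `A`-modules together with `A`-balanced,
`A`-linear structure maps `D(A) ⊗_A M_i → M_{i+1}` (recorded here as bilinear maps
`θ i : D(A) → M i → M (i+1)`) whose consecutive composites vanish. -/
structure GradedTrivExtMod (k A : Type) [Field k] [Ring A] [Algebra k A] where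
  M : ℤ → Type
  [acg : ∀ i, AddCommGroup (M i)]
  [mod : ∀ i, Module A (M i)]
  θ : ∀ i : ℤ, Module.Dual k A → M i → M (i + 1)
  addLeft : ∀ i (φ ψ : Module.Dual k A) (m : M i), θ i (φ + ψ) m = θ i φ m + θ i ψ m
  addRight : ∀ i (φ : Module.Dual k A) (m m' : M i), θ i φ (m + m') = θ i φ m + θ i φ m'
  /-- balancedness over `A`: `(φ·a) ⊗ m = φ ⊗ (a·m)`, where `(φ·a)(c) = φ(ac)`. -/
  balanced : ∀ i (φ : Module.Dual k A) (a : A) (m : M i),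
    θ i (φ.comp (LinearMap.mulLeft k a)) m = θ i φ (a • m)
  /-- `A`-linearity: `a·(φ ⊗ m) = (a·φ) ⊗ m`, where `(a·φ)(c) = φ(ca)`. -/
  linear : ∀ i (φ : Module.Dual k A) (a : A) (m : M i),
    θ i (φ.comp (LinearMap.mulRight k a)) m = a • θ i φ m
  /-- consecutive composites vanish -/
  sq : ∀ i (φ ψ : Module.Dual k A) (m : M i), θ (i + 1) φ (θ i ψ m) = 0

attribute [instance] GradedTrivExtMod.acg GradedTrivExtMod.mod

variable {k A : Type} [Field k] [Ring A] [Algebra k A]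

/-- Morphisms of graded `T(A)`-modules: degreewise `A`-linear maps commuting with the
structure maps. -/
instance : Category (GradedTrivExtMod k A) where
  Hom X Y := { h : ∀ i, X.M i →ₗ[A] Y.M i //
    ∀ (i : ℤ) (φ : Module.Dual k A) (m : X.M i),
      h (i + 1) (X.θ i φ m) = Y.θ i φ (h i m) }
  id X := ⟨fun _ => LinearMap.id, fun _ _ _ => rfl⟩
  comp f g := ⟨fun i => (g.1 i).comp (f.1 i), by
    intro i φ m
    simp [f.2, g.2]⟩
  id_comp f := by apply Subtype.ext; funext i; rfl
  comp_id f := by apply Subtype.ext; funext i; rfl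
  assoc f g h := by apply Subtype.ext; funext i; rfl

/-!
A nondegenerate symmetric associative form `B` gives a bimodule isomorphism `e : A ≅ D(A)`,
`x ↦ B x _`, which turns `φ ∈ D(A)` into the scalar `e⁻¹ φ ∈ A`. So the differential `d` of a
complex defines structure maps `φ ⊗ m ↦ d (e⁻¹ φ • m)`, whose consecutive composites vanish
because `d ∘ d = 0`. Conversely `t = e 1` is a trace form (`t (ac) = t (ca)`), so `θ t` is an
`A`-linear differential, and balancedness recovers all of `θ` from it:
`θ φ m = θ (t · e⁻¹ φ) m = θ t (e⁻¹ φ • m)`.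
-/

namespace GradedTrivExtMod

def structureMap (N : GradedTrivExtMod k A) (i : ℤ) (t : Module.Dual k A)
    (ht : ∀ a : A, t.comp (LinearMap.mulLeft k a) = t.comp (LinearMap.mulRight k a)) :
    N.M i →ₗ[A] N.M (i + 1) where
  toFun := N.θ i t
  map_add' := N.addRight i t
  map_smul' a m := by
    rw [← N.balanced, ht, N.linear, RingHom.id_apply]

def isoMk {X Y : GradedTrivExtMod k A} (f : ∀ i, X.M i ≃ₗ[A] Y.M i)
    (hf : ∀ i φ m, f (i + 1) (X.θ i φ m) = Y.θ i φ (f i m)) : X ≅ Y where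
  hom := ⟨fun i => f i, hf⟩
  inv := ⟨fun i => (f i).symm, fun i φ m => by
    change (f (i + 1)).symm (Y.θ i φ m) = X.θ i φ ((f i).symm m)
    rw [LinearEquiv.symm_apply_eq, hf, LinearEquiv.apply_symm_apply]⟩
  hom_inv_id := Subtype.ext <| funext fun i => LinearMap.ext (f i).symm_apply_apply
  inv_hom_id := Subtype.ext <| funext fun i => LinearMap.ext (f i).apply_symm_apply

end GradedTrivExtMod

/-- An isomorphism `A ≅ D(A)` of `A`-`A`-bimodules, for the actions `(φ·a)(c) = φ(ac)` and
`(a·φ)(c) = φ(ca)` of `GradedTrivExtMod`. -/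
structure DualBimoduleEquiv (k A : Type) [Field k] [Ring A] [Algebra k A] where
  toLinearEquiv : A ≃ₗ[k] Module.Dual k A
  map_mul_right : ∀ x a : A,
    toLinearEquiv (x * a) = (toLinearEquiv x).comp (LinearMap.mulLeft k a)
  map_mul_left : ∀ x a : A,
    toLinearEquiv (a * x) = (toLinearEquiv x).comp (LinearMap.mulRight k a)

namespace DualBimoduleEquiv

noncomputable def ofForm [FiniteDimensional k A] (B : LinearMap.BilinForm k A)
    (hsymm : ∀ x y : A, B x y = B y x) (hassoc : ∀ x y z : A, B (x * y) z = B x (y * z))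
    (hnondeg : B.SeparatingLeft) : DualBimoduleEquiv k A where
  toLinearEquiv := B.toDual ⟨hnondeg, fun y hy => hnondeg y fun x => hsymm y x ▸ hy x⟩
  map_mul_right x a := by
    ext c
    exact hassoc x a c
  map_mul_left x a := by
    ext c
    exact (hassoc a x c).trans ((hsymm a (x * c)).trans (hassoc x c a))

variable (e : DualBimoduleEquiv k A)

theorem symm_comp_mulLeft (φ : Module.Dual k A) (a : A) :
    e.toLinearEquiv.symm (φ.comp (LinearMap.mulLeft k a)) = e.toLinearEquiv.symm φ * a := by
  rw [LinearEquiv.symm_apply_eq, e.map_mul_right, LinearEquiv.apply_symm_apply]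

theorem symm_comp_mulRight (φ : Module.Dual k A) (a : A) :
    e.toLinearEquiv.symm (φ.comp (LinearMap.mulRight k a)) = a * e.toLinearEquiv.symm φ := by
  rw [LinearEquiv.symm_apply_eq, e.map_mul_left, LinearEquiv.apply_symm_apply]

theorem one_comp_mulLeft (a : A) :
    (e.toLinearEquiv 1).comp (LinearMap.mulLeft k a) = e.toLinearEquiv a := by
  rw [← e.map_mul_right, one_mul]

theorem one_comp_mulRight (a : A) :
    (e.toLinearEquiv 1).comp (LinearMap.mulRight k a) = e.toLinearEquiv a := by
  rw [← e.map_mul_left, mul_one]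

theorem one_comp_mulLeft_eq_mulRight (a : A) :
    (e.toLinearEquiv 1).comp (LinearMap.mulLeft k a)
      = (e.toLinearEquiv 1).comp (LinearMap.mulRight k a) := by
  rw [one_comp_mulLeft, one_comp_mulRight]

def gradedOfComplex (X : CochainComplex (ModuleCat.{0} A) ℤ) : GradedTrivExtMod k A where
  M i := X.X i
  θ i φ m := X.d i (i + 1) (e.toLinearEquiv.symm φ • m)
  addLeft i φ ψ m := by rw [map_add, add_smul, map_add]
  addRight i φ m m' := by rw [smul_add, map_add]
  balanced i φ a m := by rw [symm_comp_mulLeft, mul_smul]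
  linear i φ a m := by rw [symm_comp_mulRight, mul_smul, map_smul]
  sq i φ ψ m := by
    rw [← map_smul, ← ModuleCat.comp_apply, X.d_comp_d]
    rfl

def complexToGraded : CochainComplex (ModuleCat.{0} A) ℤ ⥤ GradedTrivExtMod k A where
  obj := e.gradedOfComplex
  map {X Y} f := ⟨fun i => (f.f i).hom, fun i φ m => by
    have comm (a : A) (x : X.X i) :
        f.f (i + 1) (X.d i (i + 1) (a • x)) = Y.d i (i + 1) (a • f.f i x) := by
      rw [← ModuleCat.comp_apply, ← f.comm, ModuleCat.comp_apply, map_smul]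
    exact comm _ m⟩

def complexOfGraded (N : GradedTrivExtMod k A) : CochainComplex (ModuleCat.{0} A) ℤ :=
  CochainComplex.of (fun i => ModuleCat.of A (N.M i))
    (fun i => ModuleCat.ofHom (N.structureMap i _ e.one_comp_mulLeft_eq_mulRight))
    (fun i => by ext m; exact N.sq i _ _ m)

theorem complexOfGraded_d_succ (N : GradedTrivExtMod k A) (i : ℤ) :
    (e.complexOfGraded N).d i (i + 1)
      = ModuleCat.ofHom (N.structureMap i _ e.one_comp_mulLeft_eq_mulRight) := by
  simp only [complexOfGraded, CochainComplex.of_d]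

def gradedToComplex : GradedTrivExtMod k A ⥤ CochainComplex (ModuleCat.{0} A) ℤ where
  obj := e.complexOfGraded
  map h := CochainComplex.ofHom (fun i => ModuleCat.ofHom (h.1 i)) fun i => by
    rw [complexOfGraded_d_succ, complexOfGraded_d_succ]
    ext m
    exact (h.2 i _ m).symm
  map_id N := by ext i : 2; rfl
  map_comp f g := by ext i : 2; rfl

theorem complexOfGraded_gradedOfComplex_d_succ (X : CochainComplex (ModuleCat.{0} A) ℤ)
    (i : ℤ) : (e.complexOfGraded (e.gradedOfComplex X)).d i (i + 1) = X.d i (i + 1) := by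
  rw [complexOfGraded_d_succ]
  ext m
  change X.d i (i + 1) (e.toLinearEquiv.symm (e.toLinearEquiv 1) • m) = X.d i (i + 1) m
  rw [LinearEquiv.symm_apply_apply, one_smul]

theorem gradedOfComplex_complexOfGraded_θ (N : GradedTrivExtMod k A) (i : ℤ)
    (φ : Module.Dual k A) (m : N.M i) :
    (e.gradedOfComplex (e.complexOfGraded N)).θ i φ m = N.θ i φ m := by
  change (e.complexOfGraded N).d i (i + 1) (e.toLinearEquiv.symm φ • m) = _
  rw [complexOfGraded_d_succ]
  change N.θ i (e.toLinearEquiv 1) (e.toLinearEquiv.symm φ • m) = _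
  rw [← N.balanced, one_comp_mulLeft, LinearEquiv.apply_symm_apply]

def unitIso : 𝟭 _ ≅ e.complexToGraded ⋙ e.gradedToComplex :=
  NatIso.ofComponents
    (fun X => HomologicalComplex.Hom.isoOfComponents (fun _ => Iso.refl _) <| by
      rintro i _ rfl
      exact (Category.id_comp _).trans
        ((e.complexOfGraded_gradedOfComplex_d_succ X i).trans (Category.comp_id _).symm))
    (fun _ => by ext : 2; rfl)

def counitIso : e.gradedToComplex ⋙ e.complexToGraded ≅ 𝟭 _ :=
  NatIso.ofComponents
    (fun N => GradedTrivExtMod.isoMk (fun _ => LinearEquiv.refl A _)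
      (e.gradedOfComplex_complexOfGraded_θ N))
    (fun _ => Subtype.ext rfl)

def complexEquivGraded : CochainComplex (ModuleCat.{0} A) ℤ ≌ GradedTrivExtMod k A :=
  .mk e.complexToGraded e.gradedToComplex e.unitIso e.counitIso

end DualBimoduleEquiv

/-- Let `A` be a symmetric finite dimensional `k`-algebra, i.e. `A`
carries a nondegenerate symmetric associative bilinear form (equivalently,
`D(A) ≅ A` as `A`-`A`-bimodules).  Then the category `C(Mod A)` of (cochain) complexes of
`A`-modules is equivalent to the category of ℤ-graded modules over the trivial extension
`T(A) = A ⋉ D(A)`. -/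
theorem complexes_equiv_graded_trivial_extension_modules
    (k A : Type) [Field k] [Ring A] [Algebra k A] [FiniteDimensional k A]
    (B : A →ₗ[k] A →ₗ[k] k)
    (hsymm : ∀ x y : A, B x y = B y x)
    (hassoc : ∀ x y z : A, B (x * y) z = B x (y * z))
    (hnondeg : ∀ x : A, (∀ y : A, B x y = 0) → x = 0) :
    Nonempty (CochainComplex (ModuleCat.{0} A) ℤ ≌ GradedTrivExtMod k A) :=
  ⟨(DualBimoduleEquiv.ofForm B hsymm hassoc hnondeg).complexEquivGraded⟩
end
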